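/- arXiv:math/0610562 — 5 statements merged into one kernel-verified Lean document; each statement's English description precedes it below -/
import Mathlib

section
/- Let ρ be a ρ-function on ω₁. Let n be a positive integer and let (A_i)_{i<n} be a block sequence of subsets of ω₁ (i.e., every element of A_i is less than every element of A_j whenever i<j), each A_i having order type ω. Let (s_α)_{α∈A_0∪…∪A_{n−1}} be a block sequence of finite subsets of ω₁ indexed along A_0∪…∪A_{n−1} (i.e., every element of s_α is less than every element of s_β whenever α<β are both in A_0∪…∪A_{n−1}). Then for every natural number p there exist ordinals α_i ∈ A_i (i<n) such that the sequence (s_{α_i})_{i<n} is p-separated. -/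
theorem stmt0_aux
    (ρ : Ordinal → Ordinal → ℕ)
    (hρ3 : ∀ β : Ordinal, β < (Cardinal.aleph 1).ord → ∀ m : ℕ,
      {α : Ordinal | α < β ∧ ρ α β ≤ m}.Finite)
    (p : ℕ) :
    ∀ (n : ℕ) (A : Fin n → Set Ordinal) (s : Ordinal → Set Ordinal),
    (∀ i j : Fin n, i < j → ∀ α ∈ A i, ∀ β ∈ A j, α < β) →
    (∀ i, (A i).Infinite) →
    (∀ α ∈ ⋃ i, A i, (s α).Finite) →
    (∀ α ∈ ⋃ i, A i, s α ⊆ Set.Iio (Cardinal.aleph 1).ord) →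
    (∀ α ∈ ⋃ i, A i, ∀ β ∈ ⋃ i, A i, α < β → ∀ x ∈ s α, ∀ y ∈ s β, x < y) →
    ∀ F : Set Ordinal, F.Finite →
    ∃ f : Fin n → Ordinal, (∀ i, f i ∈ A i) ∧ (∀ i, Disjoint (s (f i)) F) ∧
      ∀ i j : Fin n, i < j → ∀ x ∈ s (f i), ∀ y ∈ s (f j), p ≤ ρ x y := by
  intro n
  induction n with
  | zero =>
    intro A s _ _ _ _ _ F _
    exact ⟨Fin.elim0, fun i => i.elim0, fun i => i.elim0, fun i => i.elim0⟩
  | succ n ih =>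
    intro A s hAblock hAinf hsfin hssub hsblock F hF
    have hsub_union : ∀ i : Fin (n+1), A i ⊆ ⋃ i, A i := fun i => Set.subset_iUnion A i
    have hsingle : ∀ x : Ordinal, {α | α ∈ ⋃ i, A i ∧ x ∈ s α}.Subsingleton := by
      intro x α hα β hβ
      by_contra hne
      rcases lt_or_gt_of_ne hne with h | h
      · exact lt_irrefl x (hsblock α hα.1 β hβ.1 h x hα.2 x hβ.2)
      · exact lt_irrefl x (hsblock β hβ.1 α hα.1 h x hβ.2 x hα.2)
    have hBfin : {α | α ∈ A (Fin.last n) ∧ (s α ∩ F).Nonempty}.Finite := by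
      apply Set.Finite.subset (hF.biUnion (fun x _ => (hsingle x).finite))
      rintro α ⟨hmem, x, hxs, hxF⟩
      exact Set.mem_biUnion hxF ⟨hsub_union _ hmem, hxs⟩
    obtain ⟨αN, hαNA, hαNB⟩ := ((hAinf (Fin.last n)).diff hBfin).nonempty
    have hαNU : αN ∈ ⋃ i, A i := hsub_union _ hαNA
    have hNF : Disjoint (s αN) F := by
      rw [Set.disjoint_iff_inter_eq_empty, ← Set.not_nonempty_iff_eq_empty]
      exact fun h => hαNB ⟨hαNA, h⟩
    set F' : Set Ordinal := F ∪ ⋃ y ∈ s αN, {x | x < y ∧ ρ x y ≤ p} with hF'def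
    have hF' : F'.Finite :=
      hF.union ((hsfin αN hαNU).biUnion (fun y hy => hρ3 y (hssub αN hαNU hy) p))
    have hU' : (⋃ i : Fin n, A i.castSucc) ⊆ ⋃ i, A i :=
      Set.iUnion_subset fun i => hsub_union i.castSucc
    obtain ⟨f', hf'mem, hf'dis, hf'sep⟩ := ih (fun i => A i.castSucc) s
      (fun i j hij => hAblock i.castSucc j.castSucc (by simpa using hij))
      (fun i => hAinf i.castSucc)
      (fun α hα => hsfin α (hU' hα))
      (fun α hα => hssub α (hU' hα))
      (fun α hα β hβ => hsblock α (hU' hα) β (hU' hβ))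
      F' hF'
    have hlt : ∀ i : Fin n, f' i < αN := fun i =>
      hAblock i.castSucc (Fin.last n) (Fin.castSucc_lt_last i) (f' i) (hf'mem i) αN hαNA
    refine ⟨Fin.snoc f' αN, ?_, ?_, ?_⟩
    · intro i
      induction i using Fin.lastCases with
      | last => simpa using hαNA
      | cast i => simpa using hf'mem i
    · intro i
      induction i using Fin.lastCases with
      | last => simpa using hNF
      | cast i =>
        simp only [Fin.snoc_castSucc]
        exact (hf'dis i).mono_right Set.subset_union_left
    · intro i j hij x hx y hy
      induction j using Fin.lastCases with
      | last =>
        induction i using Fin.lastCases with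
        | last => exact absurd hij (lt_irrefl _)
        | cast i =>
          simp only [Fin.snoc_castSucc] at hx
          simp only [Fin.snoc_last] at hy
          have hxy : x < y :=
            hsblock (f' i) (hU' (Set.mem_iUnion.mpr ⟨i, hf'mem i⟩)) αN hαNU (hlt i) x hx y hy
          have hxF' : x ∉ F' := Set.disjoint_left.mp (hf'dis i) hx
          have : x ∉ ⋃ y ∈ s αN, {x | x < y ∧ ρ x y ≤ p} := fun h => hxF' (Set.mem_union_right _ h)
          have := fun h : x < y ∧ ρ x y ≤ p => this (Set.mem_biUnion hy h)
          by_contra hcon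
          exact this ⟨hxy, le_of_not_gt (fun hlt' => hcon (le_of_lt hlt'))⟩
      | cast j =>
        induction i using Fin.lastCases with
        | last => exact absurd (lt_trans (Fin.castSucc_lt_last j) hij) (lt_irrefl _)
        | cast i =>
          simp only [Fin.snoc_castSucc] at hx hy
          exact hf'sep i j (by simpa using hij) x hx y hy

/-- Given a ρ-function on ω₁, a block sequence `(A i)_{i<n}` of subsets of ω₁,
each of order type ω, and a block sequence `(s α)` of finite subsets of ω₁ indexed along
`⋃ i, A i`, for every `p : ℕ` there are `α_i ∈ A i` such that `(s (α_i))_{i<n}` is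
`p`-separated. -/
theorem stmt_0
    (ρ : Ordinal → Ordinal → ℕ)
    (hρ1 : ∀ α β γ : Ordinal, α < β → β < γ → γ < (Cardinal.aleph 1).ord →
      ρ α γ ≤ max (ρ α β) (ρ β γ))
    (hρ2 : ∀ α β γ : Ordinal, α < β → β < γ → γ < (Cardinal.aleph 1).ord →
      ρ α β ≤ max (ρ α γ) (ρ β γ))
    (hρ3 : ∀ β : Ordinal, β < (Cardinal.aleph 1).ord → ∀ m : ℕ,
      {α : Ordinal | α < β ∧ ρ α β ≤ m}.Finite)
    (n : ℕ) (hn : 0 < n)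
    (A : Fin n → Set Ordinal)
    (hAsub : ∀ i, A i ⊆ Set.Iio (Cardinal.aleph 1).ord)
    (hAblock : ∀ i j : Fin n, i < j → ∀ α ∈ A i, ∀ β ∈ A j, α < β)
    (hAomega : ∀ i, Nonempty ((A i) ≃o ℕ))
    (s : Ordinal → Set Ordinal)
    (hsfin : ∀ α ∈ ⋃ i, A i, (s α).Finite)
    (hssub : ∀ α ∈ ⋃ i, A i, s α ⊆ Set.Iio (Cardinal.aleph 1).ord)
    (hsblock : ∀ α ∈ ⋃ i, A i, ∀ β ∈ ⋃ i, A i, α < β →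
      ∀ x ∈ s α, ∀ y ∈ s β, x < y)
    (p : ℕ) :
    ∃ f : Fin n → Ordinal, (∀ i, f i ∈ A i) ∧
      ∀ i j : Fin n, i ≠ j → ∀ x ∈ s (f i), ∀ y ∈ s (f j), x < y → p ≤ ρ x y := by
  have hAinf : ∀ i, (A i).Infinite := by
    intro i
    obtain ⟨e⟩ := hAomega i
    rw [← Set.infinite_coe_iff]
    exact (Equiv.infinite_iff e.toEquiv).mpr inferInstance
  obtain ⟨f, hfmem, _, hfsep⟩ :=
    stmt0_aux ρ hρ3 p n A s hAblock hAinf hsfin hssub hsblock ∅ Set.finite_empty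
  refine ⟨f, hfmem, fun i j hij x hx y hy hxy => ?_⟩
  rcases lt_or_gt_of_ne hij with h | h
  · exact hfsep i j h x hx y hy
  · have : f j < f i := hAblock j i h (f j) (hfmem j) (f i) (hfmem i)
    have : y < x := hsblock (f j) (Set.mem_iUnion.mpr ⟨j, hfmem j⟩) (f i)
      (Set.mem_iUnion.mpr ⟨i, hfmem i⟩) this y hy x hx
    exact absurd hxy (not_lt.mpr this.le)
end

section
/- Let ρ be a ρ-function on ω₁. Let n be a positive integer and for each i<n let (s^i_α)_{α<ω₁} be a block sequence of finite subsets of ω₁ (i.e., every element of s^i_α is less than every element of s^i_β whenever α<β<ω₁). Then there exist countable ordinals α_0 < α_1 < … < α_{n−1} such that (s^i_{α_i})_{i<n} is a block sequence (every element of s^i_{α_i} is less than every element of s^j_{α_j} for i<j) which is separated, i.e., p-separated for p = |s^0_{α_0} ∪ … ∪ s^{n−1}_{α_{n−1}}|. -/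
universe u
open Cardinal Set

local notation "Ω₁" => Cardinal.ord (Cardinal.aleph 1)

lemma stmt1_zero_lt : (0 : Ordinal) < Ω₁ :=
  Cardinal.lt_ord.2 (by simpa using (aleph0_pos.trans_le (aleph0_le_aleph 1)))

lemma stmt1_succ_lt {a : Ordinal} (h : a < Ω₁) : a + 1 < Ω₁ := by
  rw [Ordinal.add_one_eq_succ]
  exact (Cardinal.isSuccLimit_ord (aleph0_le_aleph 1)).succ_lt h

lemma stmt1_lt_succ (a : Ordinal) : a < a + 1 := by
  rw [Ordinal.add_one_eq_succ]; exact Order.lt_succ a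

lemma stmt1_iSup_lt {g : ℕ → Ordinal.{u}} (h : ∀ m, g m < Ω₁) : iSup g < Ω₁ :=
  Ordinal.iSup_lt_ord_lift
    (by rw [Cardinal.isRegular_aleph_one.cof_eq]
        simpa using aleph0_lt_aleph_one) h

lemma stmt1_le_iSup (g : ℕ → Ordinal) (m : ℕ) : g m ≤ iSup g := Ordinal.le_iSup g m

lemma stmt1_countable_Iio {o : Ordinal.{u}} (h : o < Ω₁) : Countable (Set.Iio o) := by
  rw [← Cardinal.mk_le_aleph0_iff, Ordinal.mk_Iio_ordinal]
  have h1 : o.card ≤ ℵ₀ := Order.lt_succ_iff.1 (by rwa [Cardinal.succ_aleph0, ← Cardinal.lt_ord])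
  calc Cardinal.lift.{u+1} o.card ≤ Cardinal.lift.{u+1} ℵ₀ := Cardinal.lift_le.2 h1
    _ = ℵ₀ := Cardinal.lift_aleph0

lemma stmt1_bdd_of_countable {B : Set Ordinal} (hB : B ⊆ Set.Iio Ω₁) (hc : Countable B) :
    ∃ φ, φ < Ω₁ ∧ ∀ α ∈ B, α ≤ φ := by
  rcases B.eq_empty_or_nonempty with h | h
  · exact ⟨0, stmt1_zero_lt, by simp [h]⟩
  · have : Nonempty B := h.to_subtype
    obtain ⟨e, he⟩ := exists_surjective_nat B
    refine ⟨iSup (fun m => (e m : Ordinal)), stmt1_iSup_lt (fun m => hB (e m).2), ?_⟩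
    intro a ha
    obtain ⟨m, hm⟩ := he ⟨a, ha⟩
    calc a = (e m : Ordinal) := by rw [hm]
      _ ≤ _ := stmt1_le_iSup _ m

lemma stmt1_nat_rec_exists {β : Sort*} (init : β) (step : ℕ → β → β) :
    ∃ f : ℕ → β, f 0 = init ∧ ∀ k, f (k + 1) = step k (f k) :=
  ⟨fun k => Nat.rec init step k, rfl, fun _ => rfl⟩

/-- Given a ρ-function on ω₁ and, for each `i < n`, a block sequence
`(s i α)_{α<ω₁}` of finite subsets of ω₁, there are `α_0 < … < α_{n-1} < ω₁` such that
`(s i (α_i))_{i<n}` is a block sequence which is separated, i.e. `p`-separated for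
`p = |⋃ i, s i (α_i)|`. -/
theorem stmt_1
    (ρ : Ordinal → Ordinal → ℕ)
    (hρ1 : ∀ α β γ : Ordinal, α < β → β < γ → γ < (Cardinal.aleph 1).ord →
      ρ α γ ≤ max (ρ α β) (ρ β γ))
    (hρ2 : ∀ α β γ : Ordinal, α < β → β < γ → γ < (Cardinal.aleph 1).ord →
      ρ α β ≤ max (ρ α γ) (ρ β γ))
    (hρ3 : ∀ β : Ordinal, β < (Cardinal.aleph 1).ord → ∀ m : ℕ,
      {α : Ordinal | α < β ∧ ρ α β ≤ m}.Finite)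
    (n : ℕ) (hn : 0 < n)
    (s : Fin n → Ordinal → Set Ordinal)
    (hsfin : ∀ i : Fin n, ∀ α < (Cardinal.aleph 1).ord, (s i α).Finite)
    (hssub : ∀ i : Fin n, ∀ α < (Cardinal.aleph 1).ord,
      s i α ⊆ Set.Iio (Cardinal.aleph 1).ord)
    (hsblock : ∀ i : Fin n, ∀ α β : Ordinal, α < β → β < (Cardinal.aleph 1).ord →
      ∀ x ∈ s i α, ∀ y ∈ s i β, x < y) :
    ∃ f : Fin n → Ordinal, StrictMono f ∧ (∀ i, f i < (Cardinal.aleph 1).ord) ∧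
      (∀ i j : Fin n, i < j → ∀ x ∈ s i (f i), ∀ y ∈ s j (f j), x < y) ∧
      (∀ i j : Fin n, i ≠ j → ∀ x ∈ s i (f i), ∀ y ∈ s j (f j), x < y →
        (⋃ k, s k (f k)).ncard ≤ ρ x y) := by
  classical
  -- extend the sequences to all of ℕ
  set s' : ℕ → Ordinal → Set Ordinal :=
    fun i α => if h : i < n then s ⟨i, h⟩ α else ∅ with hs'def
  have hs'eq : ∀ (i : Fin n) (α : Ordinal), s' i.1 α = s i α := by
    intro i α; simp only [hs'def, dif_pos i.2, Fin.eta]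
  have hfin' : ∀ (i : ℕ) (α : Ordinal), α < Ω₁ → (s' i α).Finite := by
    intro i α hα; by_cases h : i < n
    · simpa only [hs'def, dif_pos h] using hsfin ⟨i, h⟩ α hα
    · simp [hs'def, dif_neg h]
  have hsub' : ∀ (i : ℕ) (α : Ordinal), α < Ω₁ → s' i α ⊆ Set.Iio Ω₁ := by
    intro i α hα; by_cases h : i < n
    · simpa only [hs'def, dif_pos h] using hssub ⟨i, h⟩ α hα
    · simp [hs'def, dif_neg h]
  have hblock' : ∀ (i : ℕ) (α β : Ordinal), α < β → β < Ω₁ →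
      ∀ x ∈ s' i α, ∀ y ∈ s' i β, x < y := by
    intro i α β hαβ hβ; by_cases h : i < n
    · simpa only [hs'def, dif_pos h] using hsblock ⟨i, h⟩ α β hαβ hβ
    · simp [hs'def, dif_neg h]
  -- pigeonhole: a size occurring unboundedly often
  have hKex : ∀ i : ℕ, ∃ k : ℕ, ∀ x, x < Ω₁ →
      ∃ α, α < Ω₁ ∧ x < α ∧ (s' i α).ncard = k := by
    intro i
    by_contra hcon
    push_neg at hcon
    choose x hx hx2 using hcon
    have hb : iSup x < Ω₁ := stmt1_iSup_lt hx
    have hα : iSup x + 1 < Ω₁ := stmt1_succ_lt hb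
    exact hx2 _ _ hα (lt_of_le_of_lt (stmt1_le_iSup x _) (stmt1_lt_succ _)) rfl
  choose K hK using hKex
  have hnxtex : ∀ (i : ℕ) (x : Ordinal), ∃ α, x < Ω₁ →
      (α < Ω₁ ∧ x < α ∧ (s' i α).ncard = K i) := by
    intro i x
    by_cases h : x < Ω₁
    · obtain ⟨α, h1, h2, h3⟩ := hK i x h; exact ⟨α, fun _ => ⟨h1, h2, h3⟩⟩
    · exact ⟨0, fun hx => absurd hx h⟩
  choose nxt hnxt using hnxtex
  -- tail lemma
  have htailex : ∀ (i : ℕ) (b : Ordinal), ∃ φ, b < Ω₁ →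
      (φ < Ω₁ ∧ ∀ α, φ < α → α < Ω₁ → s' i α ⊆ Set.Ioi b) := by
    intro i b
    by_cases hb : b < Ω₁
    swap
    · exact ⟨0, fun h => absurd h hb⟩
    have hw : ∀ a : {α : Ordinal | α < Ω₁ ∧ ((s' i α) ∩ Set.Iic b).Nonempty},
        ∃ x, x ∈ s' i a.1 ∧ x ≤ b := by
      rintro ⟨a, ha⟩
      obtain ⟨haΩ, x, hx1, hx2⟩ := ha
      exact ⟨x, hx1, hx2⟩
    choose w hw1 hw2 using hw
    have hwlt : ∀ a, w a < b + 1 := fun a => lt_of_le_of_lt (hw2 a) (stmt1_lt_succ b)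
    have hmono : ∀ a a', a.1 < a'.1 → w a < w a' := fun a a' h =>
      hblock' i a.1 a'.1 h a'.2.1 _ (hw1 a) _ (hw1 a')
    have hinj : Function.Injective
        (fun a : {α : Ordinal | α < Ω₁ ∧ ((s' i α) ∩ Set.Iic b).Nonempty} =>
          (⟨w a, hwlt a⟩ : Set.Iio (b+1))) := by
      intro a a' h
      have h' : w a = w a' := congrArg Subtype.val h
      rcases lt_trichotomy a.1 a'.1 with hlt | heq | hgt
      · exact absurd h' (ne_of_lt (hmono _ _ hlt))
      · exact Subtype.ext heq
      · exact absurd h'.symm (ne_of_lt (hmono _ _ hgt))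
    haveI : Countable (Set.Iio (b+1) : Set Ordinal) := stmt1_countable_Iio (stmt1_succ_lt hb)
    haveI : Countable {α : Ordinal | α < Ω₁ ∧ ((s' i α) ∩ Set.Iic b).Nonempty} :=
      hinj.countable
    obtain ⟨φ, hφ1, hφ2⟩ := stmt1_bdd_of_countable
      (B := {α : Ordinal | α < Ω₁ ∧ ((s' i α) ∩ Set.Iic b).Nonempty})
      (fun a ha => ha.1) inferInstance
    refine ⟨φ, fun _ => ⟨hφ1, ?_⟩⟩
    intro α hφα hαΩ x hx
    rw [Set.mem_Ioi]
    by_contra hxb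
    push_neg at hxb
    have hmem : α ∈ {α : Ordinal | α < Ω₁ ∧ ((s' i α) ∩ Set.Iic b).Nonempty} :=
      ⟨hαΩ, ⟨x, hx, hxb⟩⟩
    exact absurd (hφ2 α hmem) (not_le.2 hφα)
  choose tailB htailB using htailex
  -- the grid
  obtain ⟨St, hSt0, hStS⟩ := stmt1_nat_rec_exists ((0, 0) : Ordinal × Ordinal)
    (fun i st =>
      ((iSup fun m : ℕ => (nxt i)^[m + 1] (max st.1 (tailB i st.2))) + 1,
        (iSup fun m : ℕ =>
          sSup (insert st.2 (s' i ((nxt i)^[m + 1] (max st.1 (tailB i st.2)))))) + 1))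
  obtain ⟨C, hC0, hCS, hσS, hES⟩ :
      ∃ C : ℕ → ℕ → Ordinal,
        (∀ i, C i 0 = nxt i (max (St i).1 (tailB i (St i).2))) ∧
        (∀ i m, C i (m + 1) = nxt i (C i m)) ∧
        (∀ i, (St (i + 1)).1 = (iSup fun m => C i m) + 1) ∧
        (∀ i, (St (i + 1)).2 = (iSup fun m => sSup (insert (St i).2 (s' i (C i m)))) + 1) :=
    ⟨fun i m => (nxt i)^[m + 1] (max (St i).1 (tailB i (St i).2)),
      fun i => rfl, fun i m => Function.iterate_succ_apply' _ _ _,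
      fun i => by rw [hStS], fun i => by rw [hStS]⟩
  have hbase : ∀ i, (St i).1 < Ω₁ → (St i).2 < Ω₁ →
      max (St i).1 (tailB i (St i).2) < Ω₁ :=
    fun i h1 h2 => max_lt h1 (htailB i _ h2).1
  have hCfact : ∀ i, (St i).1 < Ω₁ → (St i).2 < Ω₁ → ∀ m,
      C i m < Ω₁ ∧ max (St i).1 (tailB i (St i).2) < C i m ∧ (s' i (C i m)).ncard = K i := by
    intro i h1 h2 m
    induction m with
    | zero =>
      obtain ⟨hα, hlt, hnc⟩ := hnxt i _ (hbase i h1 h2)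
      exact ⟨by rw [hC0]; exact hα, by rw [hC0]; exact hlt, by rw [hC0]; exact hnc⟩
    | succ m ih =>
      obtain ⟨hα, hlt, hnc⟩ := hnxt i _ ih.1
      exact ⟨by rw [hCS]; exact hα, by rw [hCS]; exact lt_trans ih.2.1 hlt,
        by rw [hCS]; exact hnc⟩
  have hInv : ∀ i, (St i).1 < Ω₁ ∧ (St i).2 < Ω₁ := by
    intro i
    induction i with
    | zero => rw [hSt0]; exact ⟨stmt1_zero_lt, stmt1_zero_lt⟩
    | succ i ih =>
      have hC := hCfact i ih.1 ih.2
      constructor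
      · rw [hσS]; exact stmt1_succ_lt (stmt1_iSup_lt fun m => (hC m).1)
      · rw [hES]
        refine stmt1_succ_lt (stmt1_iSup_lt fun m => ?_)
        have hfin : (insert (St i).2 (s' i (C i m))).Finite := (hfin' i _ (hC m).1).insert _
        have hne : (insert (St i).2 (s' i (C i m))).Nonempty := Set.insert_nonempty _ _
        rcases Set.mem_insert_iff.1 (hne.csSup_mem hfin) with h | h
        · rw [h]; exact ih.2
        · exact hsub' i _ (hC m).1 h
  have hCΩ : ∀ i m, C i m < Ω₁ := fun i m => (hCfact i (hInv i).1 (hInv i).2 m).1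
  have hCbase : ∀ i m, max (St i).1 (tailB i (St i).2) < C i m :=
    fun i m => (hCfact i (hInv i).1 (hInv i).2 m).2.1
  have hCK : ∀ i m, (s' i (C i m)).ncard = K i :=
    fun i m => (hCfact i (hInv i).1 (hInv i).2 m).2.2
  have hCmono : ∀ i, StrictMono (C i) := fun i => strictMono_nat_of_lt_succ (fun m => by
    rw [hCS]; exact (hnxt i _ (hCΩ i m)).2.1)
  have hσmono : Monotone (fun i => (St i).1) := monotone_nat_of_le_succ (fun i => by
    rw [hσS]
    calc (St i).1 ≤ max (St i).1 (tailB i (St i).2) := le_max_left _ _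
      _ ≤ C i 0 := le_of_lt (hCbase i 0)
      _ ≤ iSup (C i) := stmt1_le_iSup _ 0
      _ ≤ iSup (C i) + 1 := le_of_lt (stmt1_lt_succ _))
  have hClt_σ : ∀ i m, C i m < (St (i + 1)).1 := fun i m => by
    rw [hσS]
    exact lt_of_le_of_lt (stmt1_le_iSup (C i) m) (stmt1_lt_succ _)
  have hCcross : ∀ i j m m', i < j → C i m < C j m' := by
    intro i j m m' hij
    calc C i m < (St (i + 1)).1 := hClt_σ i m
      _ ≤ (St j).1 := hσmono hij
      _ ≤ max (St j).1 (tailB j (St j).2) := le_max_left _ _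
      _ < C j m' := hCbase j m'
  have hEmono : Monotone (fun i => (St i).2) := monotone_nat_of_le_succ (fun i => by
    rw [hES]
    have hfin : (insert (St i).2 (s' i (C i 0))).Finite := (hfin' i _ (hCΩ i 0)).insert _
    calc (St i).2 ≤ sSup (insert (St i).2 (s' i (C i 0))) :=
          le_csSup hfin.bddAbove (Set.mem_insert _ _)
      _ ≤ iSup (fun m => sSup (insert (St i).2 (s' i (C i m)))) := stmt1_le_iSup _ 0
      _ ≤ _ + 1 := le_of_lt (stmt1_lt_succ _))
  have hElow : ∀ i m, s' i (C i m) ⊆ Set.Ioi (St i).2 := fun i m =>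
    (htailB i _ (hInv i).2).2 (C i m)
      (lt_of_le_of_lt (le_max_right _ _) (hCbase i m)) (hCΩ i m)
  have hEhigh : ∀ i m, s' i (C i m) ⊆ Set.Iio (St (i + 1)).2 := by
    intro i m x hx
    rw [Set.mem_Iio, hES]
    have hfin : (insert (St i).2 (s' i (C i m))).Finite := (hfin' i _ (hCΩ i m)).insert _
    calc x ≤ sSup (insert (St i).2 (s' i (C i m))) :=
          le_csSup hfin.bddAbove (Set.mem_insert_of_mem _ hx)
      _ ≤ iSup (fun m => sSup (insert (St i).2 (s' i (C i m)))) := stmt1_le_iSup _ m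
      _ < _ + 1 := stmt1_lt_succ _
  have hδΩ : (St n).2 < Ω₁ := (hInv n).2
  have helemδ : ∀ i m, i < n → ∀ x ∈ s' i (C i m), x < (St n).2 := by
    intro i m hi x hx
    exact lt_of_lt_of_le (hEhigh i m hx) (hEmono (by omega : i + 1 ≤ n))
  have hcrossE : ∀ i j m m', i < j → ∀ x ∈ s' i (C i m), ∀ y ∈ s' j (C j m'), x < y := by
    intro i j m m' hij x hx y hy
    calc x < (St (i + 1)).2 := hEhigh i m hx
      _ ≤ (St j).2 := hEmono hij
      _ < y := hElow j m' hy
  -- pick good candidates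
  have hpickex : ∀ (i θ : ℕ), ∃ m, i < n →
      ∀ x ∈ s' i (C i m), θ ≤ ρ x ((St n).2) := by
    intro i θ
    by_contra hcon
    push_neg at hcon
    choose hi xm hxm hxρ using hcon
    have hBfin : {z : Ordinal | z < (St n).2 ∧ ρ z ((St n).2) ≤ θ}.Finite := hρ3 _ hδΩ θ
    haveI := hBfin.to_subtype
    have hmem : ∀ m, xm m ∈ {z : Ordinal | z < (St n).2 ∧ ρ z ((St n).2) ≤ θ} := fun m =>
      ⟨helemδ i m (hi m) _ (hxm m), le_of_lt (hxρ m)⟩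
    have hinj : Function.Injective
        (fun m => (⟨xm m, hmem m⟩ : {z : Ordinal | z < (St n).2 ∧ ρ z ((St n).2) ≤ θ})) := by
      intro a b hab
      have h' : xm a = xm b := congrArg Subtype.val hab
      rcases lt_trichotomy a b with h | h | h
      · exact absurd h' (ne_of_lt
          (hblock' i _ _ (hCmono i h) (hCΩ i b) _ (hxm a) _ (hxm b)))
      · exact h
      · exact absurd h'.symm (ne_of_lt
          (hblock' i _ _ (hCmono i h) (hCΩ i a) _ (hxm b) _ (hxm a)))
    haveI : Finite ℕ := Finite.of_injective _ hinj
    exact not_finite ℕ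
  choose pick hpick using hpickex
  -- bounds for values on candidate sets
  have hFbex : ∀ i m : ℕ, ∃ F : ℕ, ∀ x ∈ s' i (C i m), ρ x ((St n).2) ≤ F := by
    intro i m
    have hfin : ((fun x => ρ x ((St n).2)) '' (s' i (C i m))).Finite :=
      (hfin' i _ (hCΩ i m)).image _
    obtain ⟨F, hF⟩ := hfin.bddAbove
    exact ⟨F, fun x hx => hF (Set.mem_image_of_mem _ hx)⟩
  choose Fb hFb using hFbex
  -- the selection recursion (top level first)
  obtain ⟨Θ, hΘ0, hΘS⟩ := stmt1_nat_rec_exists (∑ k : Fin n, K k.1)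
    (fun j θ => θ + 1 + Fb (n - 1 - j) (pick (n - 1 - j) θ))
  have hΘmono : Monotone Θ := monotone_nat_of_le_succ (fun j => by rw [hΘS]; omega)
  have hΘlt : ∀ j, ∀ y ∈ s' (n - 1 - j) (C (n - 1 - j) (pick (n - 1 - j) (Θ j))),
      ρ y ((St n).2) < Θ (j + 1) := by
    intro j y hy
    rw [hΘS]
    have := hFb (n - 1 - j) (pick (n - 1 - j) (Θ j)) y hy
    omega
  -- the final choice
  refine ⟨fun i => C i.1 (pick i.1 (Θ (n - 1 - i.1))), ?_, ?_, ?_, ?_⟩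
  · intro i j hij
    exact hCcross _ _ _ _ hij
  · intro i
    exact hCΩ _ _
  · intro i j hij x hx y hy
    rw [← hs'eq] at hx hy
    exact hcrossE i.1 j.1 _ _ hij x hx y hy
  · intro i j hne x hx y hy hxy
    have hxs : x ∈ s' i.1 (C i.1 (pick i.1 (Θ (n - 1 - i.1)))) := by rw [hs'eq]; exact hx
    have hys : y ∈ s' j.1 (C j.1 (pick j.1 (Θ (n - 1 - j.1)))) := by rw [hs'eq]; exact hy
    -- cardinality bound
    have hfins : ∀ k : Fin n, (s k (C k.1 (pick k.1 (Θ (n - 1 - k.1))))).Finite := fun k =>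
      hsfin k _ (hCΩ _ _)
    have hcard : (⋃ k : Fin n, s k (C k.1 (pick k.1 (Θ (n - 1 - k.1))))).ncard
        ≤ ∑ k : Fin n, K k.1 := by
      have hunion : (⋃ k : Fin n, s k (C k.1 (pick k.1 (Θ (n - 1 - k.1)))))
          = ↑(Finset.univ.biUnion fun k : Fin n => (hfins k).toFinset) := by
        ext z; simp [Set.Finite.mem_toFinset]
      rw [hunion, Set.ncard_coe_finset]
      refine le_trans Finset.card_biUnion_le (le_of_eq (Finset.sum_congr rfl fun k _ => ?_))
      rw [← Set.ncard_eq_toFinset_card _ (hfins k), ← hs'eq, hCK]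
    rcases lt_or_gt_of_ne hne with hij | hji
    · -- main case i < j
      have hyδ : y < (St n).2 := helemδ j.1 _ j.2 y hys
      have hvx : Θ (n - 1 - i.1) ≤ ρ x ((St n).2) :=
        hpick i.1 (Θ (n - 1 - i.1)) i.2 x hxs
      have hvy : ρ y ((St n).2) < Θ ((n - 1 - j.1) + 1) := by
        have harithj : n - 1 - (n - 1 - j.1) = j.1 := by
          have := j.2; omega
        have h := hΘlt (n - 1 - j.1)
        rw [harithj] at h
        exact h y hys
      have hle : Θ ((n - 1 - j.1) + 1) ≤ Θ (n - 1 - i.1) := by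
        apply hΘmono
        have h1 := i.2
        have h2 := j.2
        have h3 : i.1 < j.1 := hij
        omega
      have hρxy : ρ x ((St n).2) ≤ ρ x y := by
        have h1 := hρ1 x y ((St n).2) hxy hyδ hδΩ
        rcases le_max_iff.1 h1 with h | h
        · exact h
        · omega
      have hp : ∑ k : Fin n, K k.1 ≤ ρ x y := by
        have h0 : Θ 0 ≤ Θ (n - 1 - i.1) := hΘmono (Nat.zero_le _)
        rw [hΘ0] at h0
        omega
      exact le_trans hcard hp
    · -- impossible case j < i
      have : y < x := hcrossE j.1 i.1 _ _ hji y hys x hxs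
      exact absurd hxy (lt_asymm this)
end

section
/- Let ‖·‖ be a norm on the vector space c₀₀(ω₁) of finitely supported real-valued functions on ω₁ which is bimonotone: ‖x·χ_I‖ ≤ ‖x‖ for every x ∈ c₀₀(ω₁) and every interval I of ω₁ (χ_I denotes the indicator function of I). Let C > 0, let k be a positive integer, and let y be a C-ℓ₁ᵏ-average: ‖y‖ = 1 and y = (x_0 + … + x_{k−1})/k for a block sequence (x_i)_{i<k} in c₀₀(ω₁) with ‖x_i‖ ≤ C for each i < k. Then for every positive integer l < k and every sequence of intervals E_0 < E_1 < … < E_{l−1} of ω₁ (every element of E_i is less than every element of E_j for i<j) one has ∑_{i<l} ‖y·χ_{E_i}‖ ≤ C(1 + 2l/k). -/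
/-!
Let `S i` be the set of indices `j` for which the block `x j` meets `E i`. Cutting `y` to `E i`
keeps only the blocks in `S i`, and each of them keeps norm at most `C` by bimonotonicity, so
`‖y·χ_{E i}‖ ≤ C·#(S i)/k`. Since both the blocks and the intervals are ordered, the pairs
`(i, j)` with `j ∈ S i` form a chain in the product order of `Fin l × Fin k`; as `i + j` is
strictly increasing along such a chain, there are at most `l + k - 1` of them, and summing gives
`∑ ‖y·χ_{E i}‖ ≤ C (k + l - 1)/k`.
-/

open Finset Function

lemma support_finset_sum_finite {α ι M : Type*} [AddCommMonoid M] (s : Finset ι)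
    {f : ι → α → M} (hf : ∀ i, (support (f i)).Finite) :
    (support (∑ i ∈ s, f i)).Finite := by
  have := HasFiniteSupport.sum hf s
  simp only [← Finset.sum_apply] at this
  exact this

lemma Set.Finite.indicator {α M : Type*} [Zero M] {f : α → M} (hf : (support f).Finite)
    (E : Set α) : (support (E.indicator f)).Finite := by
  rw [Set.support_indicator]
  exact hf.inter_of_right E

open Classical in
lemma apply_indicator_sum_le_card_mul {α ι : Type*} (N : (α → ℝ) → ℝ) (hN0 : N 0 = 0)
    (hNadd : ∀ x y : α → ℝ, (support x).Finite → (support y).Finite →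
      N (x + y) ≤ N x + N y)
    (E : Set α) (hNE : ∀ x : α → ℝ, (support x).Finite → N (E.indicator x) ≤ N x)
    (s : Finset ι) {x : ι → α → ℝ} (hx : ∀ i, (support (x i)).Finite) {C : ℝ}
    (hxC : ∀ i, N (x i) ≤ C) :
    N (E.indicator (∑ i ∈ s, x i)) ≤ #{i ∈ s | E.indicator (x i) ≠ 0} * C := by
  rw [indicator_sum, ← sum_filter_ne_zero]
  calc N (∑ i ∈ s with E.indicator (x i) ≠ 0, E.indicator (x i))
      ≤ ∑ i ∈ s with E.indicator (x i) ≠ 0, N (E.indicator (x i)) :=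
        le_sum_of_subadditive_on_pred N (fun z => (support z).Finite) hN0.le hNadd
          (fun _ _ => HasFiniteSupport.add) _
          fun i _ => (hx i).indicator E
    _ ≤ ∑ i ∈ s with E.indicator (x i) ≠ 0, C :=
        sum_le_sum fun i _ => (hNE _ (hx i)).trans (hxC i)
    _ = #{i ∈ s | E.indicator (x i) ≠ 0} * C := by simp

lemma le_of_indicator_ne_zero {α ι M : Type*} [LinearOrder α] [LinearOrder ι] [Zero M]
    {x : ι → α → M}
    (hx : ∀ i j, i < j → ∀ a ∈ support (x i), ∀ b ∈ support (x j), a < b)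
    {E F : Set α} (hEF : ∀ a ∈ E, ∀ b ∈ F, a < b) {i j : ι}
    (hi : E.indicator (x i) ≠ 0) (hj : F.indicator (x j) ≠ 0) : i ≤ j := by
  obtain ⟨a, ha⟩ := support_nonempty_iff.2 hi
  obtain ⟨b, hb⟩ := support_nonempty_iff.2 hj
  rw [Set.support_indicator] at ha hb
  by_contra! hji
  exact lt_asymm (hEF a ha.1 b hb.1) (hx j i hji b hb.2 a ha.2)

lemma sum_card_le_of_blockwise {l k : ℕ} (S : Fin l → Finset (Fin k))
    (hS : ∀ i i', i < i' → ∀ j ∈ S i, ∀ j' ∈ S i', j ≤ j') :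
    ∑ i, #(S i) ≤ l + k - 1 := by
  rw [← card_sigma]
  calc #(univ.sigma S) ≤ #(range (l + k - 1)) := by
        refine card_le_card_of_injOn (fun p => (p.1 : ℕ) + p.2) (fun p _ => ?_) ?_
        · simp only [coe_range, Set.mem_Iio]
          omega
        · rintro ⟨i, j⟩ hij ⟨i', j'⟩ hij' heq
          simp only [coe_sigma, Set.mem_sigma_iff, mem_coe, mem_univ, true_and] at hij hij' heq
          rcases lt_trichotomy i i' with h | rfl | h
          · have := hS i i' h j hij j' hij'
            simp only [Fin.lt_def, Fin.le_def] at h this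
            omega
          · simp_all [Fin.ext_iff]
          · have := hS i' i h j' hij' j hij
            simp only [Fin.lt_def, Fin.le_def] at h this
            omega
    _ = l + k - 1 := card_range _

theorem stmt_3_general
    (N : ((Set.Iio (Cardinal.aleph 1).ord : Set Ordinal) → ℝ) → ℝ)
    (hNadd : ∀ x y : (Set.Iio (Cardinal.aleph 1).ord : Set Ordinal) → ℝ,
      (Function.support x).Finite → (Function.support y).Finite →
      N (x + y) ≤ N x + N y)
    (hNsmul : ∀ (a : ℝ) (x : (Set.Iio (Cardinal.aleph 1).ord : Set Ordinal) → ℝ),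
      (Function.support x).Finite → N (a • x) = |a| * N x)
    (hNmono : ∀ x : (Set.Iio (Cardinal.aleph 1).ord : Set Ordinal) → ℝ,
      (Function.support x).Finite →
      ∀ I : Set (Set.Iio (Cardinal.aleph 1).ord : Set Ordinal), I.OrdConnected →
        N (I.indicator x) ≤ N x)
    (C : ℝ) (hC : 0 < C) (k : ℕ) (hk : 0 < k)
    (x : Fin k → ((Set.Iio (Cardinal.aleph 1).ord : Set Ordinal) → ℝ))
    (hxfin : ∀ i, (Function.support (x i)).Finite)
    (hxblock : ∀ i j : Fin k, i < j → ∀ a ∈ Function.support (x i),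
      ∀ b ∈ Function.support (x j), a < b)
    (hxC : ∀ i, N (x i) ≤ C)
    (y : (Set.Iio (Cardinal.aleph 1).ord : Set Ordinal) → ℝ)
    (hy : y = (k : ℝ)⁻¹ • ∑ i, x i)
    (l : ℕ)
    (E : Fin l → Set (Set.Iio (Cardinal.aleph 1).ord : Set Ordinal))
    (hE : ∀ i, (E i).OrdConnected)
    (hEblock : ∀ i j : Fin l, i < j → ∀ a ∈ E i, ∀ b ∈ E j, a < b) :
    ∑ i, N ((E i).indicator y) ≤ C * (1 + 2 * l / k) := by
  classical
  have hN0 : N 0 = 0 := by simpa using hNsmul 0 0 (by simp)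
  have hk' : (0 : ℝ) < k := by exact_mod_cast hk
  let S : Fin l → Finset (Fin k) := fun i => {j | (E i).indicator (x j) ≠ 0}
  have hpiece : ∀ i, N ((E i).indicator y) ≤ #(S i) * C / k := by
    intro i
    have hsmul : (E i).indicator ((k : ℝ)⁻¹ • ∑ j, x j) =
        (k : ℝ)⁻¹ • (E i).indicator (∑ j, x j) :=
      Set.indicator_const_smul (E i) (k : ℝ)⁻¹ (∑ j, x j)
    rw [hy, hsmul, hNsmul _ _ ((support_finset_sum_finite _ hxfin).indicator (E i)),
      abs_of_pos (inv_pos.2 hk'), inv_mul_le_iff₀ hk', mul_div_cancel₀ _ hk'.ne']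
    exact apply_indicator_sum_le_card_mul N hN0 hNadd (E i) (fun z hz => hNmono z hz _ (hE i))
      univ hxfin hxC
  have hcount : ∑ i, #(S i) ≤ l + k - 1 :=
    sum_card_le_of_blockwise S fun i i' hii' j hj j' hj' =>
      le_of_indicator_ne_zero hxblock (hEblock i i' hii') (mem_filter.1 hj).2 (mem_filter.1 hj').2
  calc ∑ i, N ((E i).indicator y) ≤ ∑ i, #(S i) * C / k := sum_le_sum fun i _ => hpiece i
    _ = (∑ i, #(S i) : ℕ) * C / k := by push_cast; rw [sum_mul, sum_div]
    _ ≤ (k + 2 * l) * C / k := by gcongr; exact_mod_cast hcount.trans (by omega)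
    _ = C * (1 + 2 * l / k) := by field_simp

/-- If `N` is a bimonotone norm on `c₀₀(ω₁)` and `y` is a normalized
`C-ℓ₁ᵏ`-average, then for every `l < k` and every block sequence of intervals
`E_0 < … < E_{l-1}` of ω₁ one has `∑_{i<l} N (y·χ_{E_i}) ≤ C (1 + 2 l / k)`.
Here `c₀₀(ω₁)` is modeled as the finitely supported functions
`(Set.Iio (Cardinal.aleph 1).ord) → ℝ`. -/
theorem stmt_3
    (N : ((Set.Iio (Cardinal.aleph 1).ord : Set Ordinal) → ℝ) → ℝ)
    (hN0 : ∀ x : (Set.Iio (Cardinal.aleph 1).ord : Set Ordinal) → ℝ,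
      (Function.support x).Finite → (N x = 0 ↔ x = 0))
    (hNadd : ∀ x y : (Set.Iio (Cardinal.aleph 1).ord : Set Ordinal) → ℝ,
      (Function.support x).Finite → (Function.support y).Finite →
      N (x + y) ≤ N x + N y)
    (hNsmul : ∀ (a : ℝ) (x : (Set.Iio (Cardinal.aleph 1).ord : Set Ordinal) → ℝ),
      (Function.support x).Finite → N (a • x) = |a| * N x)
    (hNmono : ∀ x : (Set.Iio (Cardinal.aleph 1).ord : Set Ordinal) → ℝ,
      (Function.support x).Finite →
      ∀ I : Set (Set.Iio (Cardinal.aleph 1).ord : Set Ordinal), I.OrdConnected →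
        N (I.indicator x) ≤ N x)
    (C : ℝ) (hC : 0 < C) (k : ℕ) (hk : 0 < k)
    (x : Fin k → ((Set.Iio (Cardinal.aleph 1).ord : Set Ordinal) → ℝ))
    (hxfin : ∀ i, (Function.support (x i)).Finite)
    (hxne : ∀ i, x i ≠ 0)
    (hxblock : ∀ i j : Fin k, i < j → ∀ a ∈ Function.support (x i),
      ∀ b ∈ Function.support (x j), a < b)
    (hxC : ∀ i, N (x i) ≤ C)
    (y : (Set.Iio (Cardinal.aleph 1).ord : Set Ordinal) → ℝ)
    (hy : y = (k : ℝ)⁻¹ • ∑ i, x i)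
    (hynorm : N y = 1)
    (l : ℕ) (hl : 0 < l) (hlk : l < k)
    (E : Fin l → Set (Set.Iio (Cardinal.aleph 1).ord : Set Ordinal))
    (hE : ∀ i, (E i).OrdConnected)
    (hEblock : ∀ i j : Fin l, i < j → ∀ a ∈ E i, ∀ b ∈ E j, a < b) :
    ∑ i, N ((E i).indicator y) ≤ C * (1 + 2 * l / k) :=
  stmt_3_general N hNadd hNsmul hNmono C hC k hk x hxfin hxblock hxC y hy l E hE hEblock
end

section
/- Let X be a real Banach space with the following property: for every closed linear subspace Y of X and every bounded linear operator T : Y → X there exist λ ∈ ℝ and an ω₁-singular bounded operator S : Y → X such that T = λ·i_{Y,X} + S, where i_{Y,X} : Y → X is the inclusion map. Then X is ω₁-hereditarily indecomposable: for every closed linear subspace W of X and every pair of closed linear subspaces Y, Z of W with Y ∩ Z = {0} and Y + Z = W (a closed decomposition W = Y ⊕ Z), either Y or Z is separable. -/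
/-- A bounded operator `S : Y →L[ℝ] X` is ω₁-singular if it is not an isomorphism on any
non-separable (closed) subspace of `Y`. -/
def OmegaOneSingular {Y X : Type*} [NormedAddCommGroup Y] [NormedSpace ℝ Y]
    [NormedAddCommGroup X] [NormedSpace ℝ X] (S : Y →L[ℝ] X) : Prop :=
  ∀ Z : Subspace ℝ Y, IsClosed (Z : Set Y) →
    ¬ TopologicalSpace.IsSeparable (Z : Set Y) →
    ¬ ∃ c : ℝ, 0 < c ∧ ∀ z ∈ Z, c * ‖z‖ ≤ ‖S z‖

/-- Transfer of separability from a pulled-back subspace. -/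
lemma sep_transfer {X : Type*} [NormedAddCommGroup X] [NormedSpace ℝ X]
    (W Y : Subspace ℝ X) (hle : Y ≤ W)
    (hs : TopologicalSpace.IsSeparable ((Y.comap W.subtype : Subspace ℝ W) : Set W)) :
    TopologicalSpace.IsSeparable (Y : Set X) := by
  have himg : (Y : Set X) = Subtype.val '' ((Y.comap W.subtype : Subspace ℝ W) : Set W) := by
    ext x
    constructor
    · intro hx
      exact ⟨⟨x, hle hx⟩, hx, rfl⟩
    · rintro ⟨⟨y, hyW⟩, hy, rfl⟩
      exact hy
  rw [himg]
  exact hs.image continuous_subtype_val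

/-- If every bounded operator from a closed subspace `Y` of `X` into `X` is a
scalar multiple of the inclusion plus an ω₁-singular operator, then `X` is ω₁-hereditarily
indecomposable: in every closed decomposition `W = Y ⊕ Z` of a closed subspace `W`,
either `Y` or `Z` is separable. -/
theorem stmt_4 (X : Type*) [NormedAddCommGroup X] [NormedSpace ℝ X] [CompleteSpace X]
    (h : ∀ Y : Subspace ℝ X, IsClosed (Y : Set X) → ∀ T : Y →L[ℝ] X,
      ∃ (lam : ℝ) (S : Y →L[ℝ] X), OmegaOneSingular S ∧ T = lam • Y.subtypeL + S) :
    ∀ W Y Z : Subspace ℝ X, IsClosed (W : Set X) → IsClosed (Y : Set X) →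
      IsClosed (Z : Set X) → Y ⊓ Z = ⊥ → Y ⊔ Z = W →
      TopologicalSpace.IsSeparable (Y : Set X) ∨
        TopologicalSpace.IsSeparable (Z : Set X) := by
  intro W Y Z hW hY hZ hInf hSup
  have hYW : Y ≤ W := hSup ▸ le_sup_left
  have hZW : Z ≤ W := hSup ▸ le_sup_right
  haveI : CompleteSpace W := hW.completeSpace_coe
  set Y' : Subspace ℝ W := Y.comap W.subtype with hY'def
  set Z' : Subspace ℝ W := Z.comap W.subtype with hZ'def
  have hY' : IsClosed (Y' : Set W) := hY.preimage continuous_subtype_val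
  have hZ' : IsClosed (Z' : Set W) := hZ.preimage continuous_subtype_val
  have hcompl : IsCompl Y' Z' := by
    constructor
    · rw [disjoint_iff, hY'def, hZ'def, ← Submodule.comap_inf, hInf]
      simp [Submodule.comap_bot, Submodule.ker_subtype]
    · rw [codisjoint_iff]
      apply Submodule.map_injective_of_injective W.injective_subtype
      rw [Submodule.map_sup, hY'def, hZ'def, Submodule.map_comap_subtype,
        Submodule.map_comap_subtype, Submodule.map_top, Submodule.range_subtype,
        inf_of_le_right hYW, inf_of_le_right hZW, hSup]
  set P := Y'.linearProjOfClosedCompl Z' hcompl hY' hZ' with hPdef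
  set T : W →L[ℝ] X := W.subtypeL.comp (Y'.subtypeL.comp P) with hTdef
  obtain ⟨lam, S, hSsing, hTS⟩ := h W hW T
  have hSval : ∀ w : W, S w = T w - lam • (w : X) := by
    intro w
    have := congrFun (congrArg (DFunLike.coe) hTS) w
    simp only [ContinuousLinearMap.add_apply, ContinuousLinearMap.smul_apply] at this
    rw [this]
    simp [Submodule.subtypeL_apply]
  by_cases hlam : lam = 1
  · -- S = -id on Z', so Z' is separable
    right
    apply sep_transfer W Z hZW
    by_contra hns
    apply hSsing Z' hZ' hns
    refine ⟨1, one_pos, fun z hz => ?_⟩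
    have hTz : T z = 0 := by
      rw [hTdef]
      simp only [ContinuousLinearMap.comp_apply, hPdef,
        Submodule.coe_continuous_linearProjOfClosedCompl']
      rw [Submodule.linearProjOfIsCompl_apply_right hcompl ⟨z, hz⟩]
      simp
    rw [hSval z, hTz, hlam, one_smul, zero_sub, norm_neg, one_mul]
    rfl
  · -- S = (1-lam) • id on Y', so Y' is separable
    left
    apply sep_transfer W Y hYW
    by_contra hns
    apply hSsing Y' hY' hns
    refine ⟨|1 - lam|, abs_pos.mpr (sub_ne_zero.mpr (Ne.symm hlam)), fun y hy => ?_⟩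
    have hTy : T y = (y : X) := by
      rw [hTdef]
      simp only [ContinuousLinearMap.comp_apply, hPdef,
        Submodule.coe_continuous_linearProjOfClosedCompl']
      rw [show (y : W) = ((⟨y, hy⟩ : Y') : W) from rfl,
        Submodule.linearProjOfIsCompl_apply_left hcompl ⟨y, hy⟩]
      rfl
    rw [hSval y, hTy]
    nth_rewrite 1 [← one_smul ℝ ((y : X))]
    rw [← sub_smul, norm_smul]
    simp only [Real.norm_eq_abs]
    have : ‖(y : X)‖ = ‖y‖ := rfl
    rw [this]
end

section
/- Let X be a non-separable real Banach space and let P : X → X be a bounded linear operator with P∘P = P. Suppose P = λ·id_X + S for some λ ∈ ℝ and some ω₁-singular bounded operator S : X → X. Then λ = 0 or λ = 1. -/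
theorem IsIdempotentElem.neg_add_smul_one_mul_eq {R A : Type*} [CommRing R] [Ring A]
    [Algebra R A] {p s : A} (hp : IsIdempotentElem p) {c : R} (hps : p = c • 1 + s) :
    -(s + (2 * c - 1) • 1) * s = (c ^ 2 - c) • 1 := by
  have h := hp.eq
  subst hps
  simp only [add_mul, mul_add, smul_mul_assoc, mul_smul_comm, one_mul, mul_one, neg_mul,
    neg_add] at h ⊢
  linear_combination (norm := module) -h

theorem ContinuousLinearMap.exists_pos_mul_norm_le_of_comp_eq_smul {𝕜 X Y : Type*}
    [NontriviallyNormedField 𝕜] [NormedAddCommGroup X] [NormedSpace 𝕜 X]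
    [NormedAddCommGroup Y] [NormedSpace 𝕜 Y] {S : X →L[𝕜] Y} {T : Y →L[𝕜] X} {μ : 𝕜}
    (hμ : μ ≠ 0) (hTS : ∀ x, T (S x) = μ • x) :
    ∃ c : ℝ, 0 < c ∧ ∀ x, c * ‖x‖ ≤ ‖S x‖ := by
  have hT : 0 < ‖T‖ + 1 := by positivity
  refine ⟨‖μ‖ / (‖T‖ + 1), div_pos (norm_pos_iff.2 hμ) hT, fun x => ?_⟩
  rw [div_mul_eq_mul_div, div_le_iff₀ hT]
  calc ‖μ‖ * ‖x‖ = ‖T (S x)‖ := by rw [hTS, norm_smul]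
    _ ≤ ‖T‖ * ‖S x‖ := T.le_opNorm _
    _ ≤ ‖S x‖ * (‖T‖ + 1) := by nlinarith [norm_nonneg (S x)]

theorem OmegaOneSingular.not_exists_pos_mul_norm_le {Y X : Type*} [NormedAddCommGroup Y]
    [NormedSpace ℝ Y] [NormedAddCommGroup X] [NormedSpace ℝ X] {S : Y →L[ℝ] X}
    (hS : OmegaOneSingular S) (hY : ¬ TopologicalSpace.IsSeparable (Set.univ : Set Y)) :
    ¬ ∃ c : ℝ, 0 < c ∧ ∀ y, c * ‖y‖ ≤ ‖S y‖ := by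
  rintro ⟨c, hc, hbound⟩
  exact hS ⊤ (by simp) (by simpa using hY) ⟨c, hc, fun y _ => hbound y⟩

theorem stmt_8_general (X : Type*) [NormedAddCommGroup X] [NormedSpace ℝ X]
    (hX : ¬ TopologicalSpace.IsSeparable (Set.univ : Set X))
    (P : X →L[ℝ] X) (hP : P.comp P = P)
    (lam : ℝ) (S : X →L[ℝ] X) (hS : OmegaOneSingular S)
    (hdecomp : P = lam • ContinuousLinearMap.id ℝ X + S) :
    lam = 0 ∨ lam = 1 := by
  by_contra! hlam
  have hμ : lam ^ 2 - lam ≠ 0 := by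
    rw [sq, ← mul_sub_one]
    exact mul_ne_zero hlam.1 (sub_ne_zero.2 hlam.2)
  have hTS := (show IsIdempotentElem P from hP).neg_add_smul_one_mul_eq hdecomp
  exact hS.not_exists_pos_mul_norm_le hX <|
    ContinuousLinearMap.exists_pos_mul_norm_le_of_comp_eq_smul
      (T := -(S + (2 * lam - 1) • 1)) hμ fun x => congr($hTS x)

/-- If `X` is a non-separable Banach space and `P : X → X` is a bounded
projection which is a multiple `lam` of the identity plus an ω₁-singular operator,
then `lam = 0` or `lam = 1`. -/
theorem stmt_8 (X : Type*) [NormedAddCommGroup X] [NormedSpace ℝ X] [CompleteSpace X]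
    (hX : ¬ TopologicalSpace.IsSeparable (Set.univ : Set X))
    (P : X →L[ℝ] X) (hP : P.comp P = P)
    (lam : ℝ) (S : X →L[ℝ] X) (hS : OmegaOneSingular S)
    (hdecomp : P = lam • ContinuousLinearMap.id ℝ X + S) :
    lam = 0 ∨ lam = 1 :=
  stmt_8_general X hX P hP lam S hS hdecomp
end
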